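/- For elements a ∈ A, b ∈ B of C*-algebras, the absolute value of an elementary tensor satisfies |a ⊗ b| = |a| ⊗ |b| in the (spatial) tensor product A ⊗ B, where |x| = (x*x)^{1/2}. -/

import Mathlib

/-!
Since the two factors commute, `star (a ⊗ b) * (a ⊗ b) = (star a * a) ⊗ (star b * b)`.
Writing `star a * a = p * p` and `star b * b = q * q` with `p, q` their square roots,
`p ⊗ q` is a product of commuting nonnegative elements, hence nonnegative, and it squares to
`(star a * a) ⊗ (star b * b)`; uniqueness of nonnegative square roots concludes.
-/

lemma star_mul_mul_self_of_commute {R : Type*} [Semiring R] [StarRing R] {x y : R}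
    (h : Commute (star x * x) (star y)) :
    star (x * y) * (x * y) = star x * x * (star y * y) := by
  rw [star_mul, mul_assoc, ← mul_assoc (star x), ← mul_assoc (star y), ← h.eq, mul_assoc]

lemma CFC.sqrt_mul_self_mul_mul_self_of_commute {A : Type*} [CStarAlgebra A] [PartialOrder A]
    [StarOrderedRing A] {p q : A} (hp : 0 ≤ p) (hq : 0 ≤ q) (h : Commute p q) :
    CFC.sqrt (p * p * (q * q)) = p * q :=
  CFC.sqrt_unique (by rw [h.mul_mul_mul_comm]) (h.mul_nonneg hp hq)

/-- `A ⊗ B` is modelled by commuting star homomorphisms into `T`, `a ⊗ b` being `ιA a * ιB b`. -/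
theorem stmt_13_general (A B T : Type*)
    [CStarAlgebra A] [PartialOrder A] [StarOrderedRing A]
    [CStarAlgebra B] [PartialOrder B] [StarOrderedRing B]
    [CStarAlgebra T] [PartialOrder T] [StarOrderedRing T]
    (ιA : A →⋆ₐ[ℂ] T) (ιB : B →⋆ₐ[ℂ] T)
    (hcomm : ∀ (a : A) (b : B), ιA a * ιB b = ιB b * ιA a)
    (a : A) (b : B) :
    CFC.sqrt (star (ιA a * ιB b) * (ιA a * ιB b)) =
      ιA (CFC.sqrt (star a * a)) * ιB (CFC.sqrt (star b * b)) := by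
  have hcomm' (x : A) (y : B) : Commute (ιA x) (ιB y) := hcomm x y
  set p := CFC.sqrt (star a * a)
  set q := CFC.sqrt (star b * b)
  have hp : star a * a = p * p := (CFC.sqrt_mul_sqrt_self _ (star_mul_self_nonneg a)).symm
  have hq : star b * b = q * q := (CFC.sqrt_mul_sqrt_self _ (star_mul_self_nonneg b)).symm
  rw [star_mul_mul_self_of_commute (by simpa only [← map_star, ← map_mul] using hcomm' _ _),
    ← map_star, ← map_mul, ← map_star, ← map_mul, hp, hq, map_mul, map_mul]
  exact CFC.sqrt_mul_self_mul_mul_self_of_commute (map_nonneg ιA (CFC.sqrt_nonneg _))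
    (map_nonneg ιB (CFC.sqrt_nonneg _)) (hcomm' p q)

/-- The spatial tensor product `A ⊗ B` is realized inside a C*-algebra `T` via a pair of
commuting injective star-algebra homomorphisms, an elementary tensor `a ⊗ b`
corresponding to `ιA a * ιB b`.  The statement: `|a ⊗ b| = |a| ⊗ |b|`, where
`|x| = (x*x)^(1/2)` is given by `CFC.sqrt (star x * x)`. -/
theorem stmt_13 (A B T : Type*)
    [CStarAlgebra A] [PartialOrder A] [StarOrderedRing A]
    [CStarAlgebra B] [PartialOrder B] [StarOrderedRing B]
    [CStarAlgebra T] [PartialOrder T] [StarOrderedRing T]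
    (ιA : A →⋆ₐ[ℂ] T) (ιB : B →⋆ₐ[ℂ] T)
    (hA : Function.Injective ιA) (hB : Function.Injective ιB)
    (hcomm : ∀ (a : A) (b : B), ιA a * ιB b = ιB b * ιA a)
    (a : A) (b : B) :
    CFC.sqrt (star (ιA a * ιB b) * (ιA a * ιB b)) =
      ιA (CFC.sqrt (star a * a)) * ιB (CFC.sqrt (star b * b)) :=
  stmt_13_general A B T ιA ιB hcomm a b
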